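/- Let (A₁, V₁) and (A₂, V₂) be central arrangements over a field K. Then the product arrangement A = A₁ × A₂ in V₁ ⊕ V₂ is hereditarily divisionally free if and only if both A₁ and A₂ are hereditarily divisionally free. -/

import Mathlib

open scoped Classical

noncomputable section

namespace Arrangement

universe u u' u₁ u₂ v

variable (K : Type v) [Field K]

section Basic

variable {V : Type u} [AddCommGroup V] [Module K V]

/-- A (linear) hyperplane: the kernel of a nonzero linear functional. -/
def IsHyperplane (H : Submodule K V) : Prop :=
  ∃ f : V →ₗ[K] K, f ≠ 0 ∧ H = LinearMap.ker f

/-- A central arrangement: a finite set of linear hyperplanes. -/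
def IsCentralArrangement (A : Finset (Submodule K V)) : Prop :=
  ∀ H ∈ A, IsHyperplane K H

/-- The intersection lattice `L(A)`: all intersections of subsets of `A`
(with the ambient space `⊤` as the empty intersection). -/
def lattice (A : Finset (Submodule K V)) : Finset (Submodule K V) :=
  A.powerset.image fun S => S.inf id

/-- The restriction `A^X` of the arrangement `A` to `X`, an arrangement in `X`:
`A^X = { X ∩ H : H ∈ A, X ⊄ H }`. -/
def restrict (A : Finset (Submodule K V)) (X : Submodule K V) :
    Finset (Submodule K X) :=
  (A.filter fun H => ¬ X ≤ H).image fun H => H.comap X.subtype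

/-- The localization `A_X = { H ∈ A : X ⊆ H }`. -/
def localization (A : Finset (Submodule K V)) (X : Submodule K V) :
    Finset (Submodule K V) :=
  A.filter fun H => X ≤ H

/-- The Möbius function `μ(V, ·)` of a finite set `L` of subspaces, ordered by
reverse inclusion with top element the ambient space `⊤`:
`μ(⊤) = 1` and `μ(X) = - ∑_{Z ∈ L, X ⊊ Z} μ(Z)`. -/
def mob (L : Finset (Submodule K V)) (X : Submodule K V) : ℤ :=
  if X = ⊤ then 1
  else - ∑ Z ∈ (L.filter fun Z => X < Z).attach, mob L Z.1
termination_by (L.filter fun Z => X < Z).card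
decreasing_by
  have hZ := Z.2
  rw [Finset.mem_filter] at hZ
  refine Finset.card_lt_card ((Finset.ssubset_iff_of_subset ?_).mpr ?_)
  · intro W hW
    rw [Finset.mem_filter] at hW ⊢
    exact ⟨hW.1, lt_trans hZ.2 hW.2⟩
  · exact ⟨Z.1, Finset.mem_filter.mpr ⟨hZ.1, hZ.2⟩,
      fun h => absurd (Finset.mem_filter.mp h).2 (lt_irrefl _)⟩

/-- The characteristic polynomial `χ(A, t) = ∑_{X ∈ L(A)} μ(V, X) t^{dim X} ∈ ℤ[t]`. -/
def charPoly (A : Finset (Submodule K V)) : Polynomial ℤ :=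
  ∑ X ∈ lattice K A,
    Polynomial.C (mob K (lattice K A) X) * Polynomial.X ^ Module.finrank K X

end Basic

/-- Linear isomorphism of arrangements: a linear isomorphism of the ambient
spaces carrying one set of hyperplanes bijectively onto the other. -/
def ArrIso {V : Type u} [AddCommGroup V] [Module K V]
    {W : Type u'} [AddCommGroup W] [Module K W]
    (A : Finset (Submodule K V)) (B : Finset (Submodule K W)) : Prop :=
  ∃ e : V ≃ₗ[K] W, B = A.image fun H => H.map (e : V →ₗ[K] W)

/-- The product arrangement `A₁ × A₂` in `V₁ ⊕ V₂`. -/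
def prodArr {V₁ : Type u₁} [AddCommGroup V₁] [Module K V₁]
    {V₂ : Type u₂} [AddCommGroup V₂] [Module K V₂]
    (A₁ : Finset (Submodule K V₁)) (A₂ : Finset (Submodule K V₂)) :
    Finset (Submodule K (V₁ × V₂)) :=
  (A₁.image fun H => H.prod ⊤) ∪ (A₂.image fun H => Submodule.prod ⊤ H)

section FreeCoord

variable {n : ℕ}

/-- The linear polynomial in `K[x₁, …, xₙ]` corresponding to a linear form on `Kⁿ`. -/
def formPoly (f : (Fin n → K) →ₗ[K] K) : MvPolynomial (Fin n) K :=
  ∑ i, MvPolynomial.C (f (Pi.single i 1)) * MvPolynomial.X i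

/-- The module `D(A) = {θ ∈ Der_K(S) : θ(Q) ∈ Q·S}` of derivations associated to
a defining polynomial `Q`, as a submodule of all `K`-derivations of `S = K[x₁,…,xₙ]`. -/
def derModule (Q : MvPolynomial (Fin n) K) :
    Submodule (MvPolynomial (Fin n) K)
      (Derivation K (MvPolynomial (Fin n) K) (MvPolynomial (Fin n) K)) where
  carrier := {θ | θ Q ∈ Ideal.span {Q}}
  add_mem' := fun {a b} ha hb => by
    simp only [Set.mem_setOf_eq, Derivation.add_apply] at *
    exact add_mem ha hb
  zero_mem' := by
    simp only [Set.mem_setOf_eq, Derivation.zero_apply]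
    exact zero_mem _
  smul_mem' := fun c θ hθ => by
    simp only [Set.mem_setOf_eq, Derivation.smul_apply, smul_eq_mul] at *
    exact Ideal.mul_mem_left _ c hθ

/-- A defining polynomial `Q(A) = ∏_{H ∈ A} α_H` for a choice `α` of defining
linear forms. -/
def defPoly (A : Finset (Submodule K (Fin n → K)))
    (α : Submodule K (Fin n → K) → ((Fin n → K) →ₗ[K] K)) : MvPolynomial (Fin n) K :=
  ∏ H ∈ A, formPoly K (α H)

/-- Freeness of an arrangement in `Kⁿ`: for a choice of defining linear forms,
`D(A)` is a free module over `S = K[x₁,…,xₙ]`. -/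
def IsFreeCoord (A : Finset (Submodule K (Fin n → K))) : Prop :=
  ∃ α : Submodule K (Fin n → K) → ((Fin n → K) →ₗ[K] K),
    (∀ H ∈ A, α H ≠ 0 ∧ H = LinearMap.ker (α H)) ∧
    Module.Free (MvPolynomial (Fin n) K) (derModule K (defPoly K A α))

/-- `A` is free with multiset of exponents `b`: `D(A)` has a basis of `n`
homogeneous derivations whose polynomial degrees form the multiset `b`. -/
def IsFreeWithExpCoord (A : Finset (Submodule K (Fin n → K))) (b : Multiset ℕ) : Prop :=
  ∃ α : Submodule K (Fin n → K) → ((Fin n → K) →ₗ[K] K),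
    (∀ H ∈ A, α H ≠ 0 ∧ H = LinearMap.ker (α H)) ∧
    ∃ (e : Module.Basis (Fin n) (MvPolynomial (Fin n) K) (derModule K (defPoly K A α)))
      (d : Fin n → ℕ),
      (∀ i j, MvPolynomial.IsHomogeneous ((e i).1 (MvPolynomial.X j)) (d i)) ∧
      Finset.univ.val.map d = b

end FreeCoord

/-- Freeness of an arrangement in an abstract space, via a linear identification
of the ambient space with `Kⁿ`. -/
def IsFree {V : Type u} [AddCommGroup V] [Module K V]
    (A : Finset (Submodule K V)) : Prop :=
  ∃ (n : ℕ) (e : V ≃ₗ[K] (Fin n → K)),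
    IsFreeCoord K (A.image fun H => H.map (e : V →ₗ[K] Fin n → K))

/-- `A` is free with multiset of exponents `b`, via a linear identification of the
ambient space with `Kⁿ`. -/
def IsFreeWithExp {V : Type u} [AddCommGroup V] [Module K V]
    (A : Finset (Submodule K V)) (b : Multiset ℕ) : Prop :=
  ∃ (n : ℕ) (e : V ≃ₗ[K] (Fin n → K)),
    IsFreeWithExpCoord K (A.image fun H => H.map (e : V →ₗ[K] Fin n → K)) b

/-- Auxiliary fueled definition of divisional freeness: `DivFreeAux K n V A` holds
if `A` admits a division chain of length at most `n` down to dimension `≤ 2` or to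
the empty arrangement. -/
def DivFreeAux (n : ℕ) :
    (V : Type u) → [AddCommGroup V] → [Module K V] → Finset (Submodule K V) → Prop :=
  Nat.rec
    (motive := fun _ => (V : Type u) → [AddCommGroup V] → [Module K V] →
      Finset (Submodule K V) → Prop)
    (fun V i1 i2 A => letI := i1; letI := i2; Module.finrank K V ≤ 2 ∨ A = ∅)
    (fun _ ih V i1 i2 A => letI := i1; letI := i2;
      Module.finrank K V ≤ 2 ∨ A = ∅ ∨
        ∃ H ∈ A, ih ↥H (restrict K A H) ∧ charPoly K (restrict K A H) ∣ charPoly K A)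
    n

/-- Divisional freeness (Abe): an `ℓ`-arrangement `A` is divisionally free if
`ℓ ≤ 2`, or `A = ∅`, or there is `H ∈ A` with `A^H` divisionally free and
`χ(A^H, t) ∣ χ(A, t)` in `ℤ[t]`. -/
def IsDivFree {V : Type u} [AddCommGroup V] [Module K V]
    (A : Finset (Submodule K V)) : Prop :=
  DivFreeAux K (Module.finrank K V) V A

/-- Hereditary divisional freeness: every restriction `A^X`, `X ∈ L(A)`, is
divisionally free. -/
def IsHeredDivFree {V : Type u} [AddCommGroup V] [Module K V]
    (A : Finset (Submodule K V)) : Prop :=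
  ∀ X ∈ lattice K A, IsDivFree K (restrict K A X)

/-- Auxiliary fueled definition of inductive freeness. -/
def IndFreeAux (n : ℕ) :
    (V : Type u) → [AddCommGroup V] → [Module K V] → Finset (Submodule K V) → Prop :=
  Nat.rec
    (motive := fun _ => (V : Type u) → [AddCommGroup V] → [Module K V] →
      Finset (Submodule K V) → Prop)
    (fun V i1 i2 A => A = ∅)
    (fun _ ih V i1 i2 A => letI := i1; letI := i2;
      A = ∅ ∨ ∃ H ∈ A, ∃ b' b'' : Multiset ℕ,
        ih V (A.erase H) ∧ ih ↥H (restrict K A H) ∧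
        IsFreeWithExp K (A.erase H) b' ∧ IsFreeWithExp K (restrict K A H) b'' ∧
        b'' ≤ b')
    n

/-- Inductive freeness: the smallest class of arrangements containing the empty
arrangements and closed under the addition part of the Addition–Deletion theorem
(i.e. membership has a finite derivation). -/
def IsIndFree {V : Type u} [AddCommGroup V] [Module K V]
    (A : Finset (Submodule K V)) : Prop :=
  ∃ n, IndFreeAux K n V A

/-- The `i`-th coordinate functional `x_i` on `ℂ^ℓ`. -/
def xcoord (ℓ : ℕ) (i : Fin ℓ) : (Fin ℓ → ℂ) →ₗ[ℂ] ℂ := LinearMap.proj i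

/-- The Orlik–Solomon intermediate arrangement `A^k_ℓ(r)` in `ℂ^ℓ` with defining
polynomial `x₁ ⋯ x_k ∏_{i<j, 0 ≤ n < r} (x_i - ζⁿ x_j)`, where `ζ` is a primitive
`r`-th root of unity. -/
def Akl (r ℓ k : ℕ) (ζ : ℂ) : Finset (Submodule ℂ (Fin ℓ → ℂ)) :=
  ((Finset.univ.filter fun i : Fin ℓ => (i : ℕ) < k).image fun i =>
    LinearMap.ker (xcoord ℓ i)) ∪
  (((Finset.univ : Finset (Fin ℓ × Fin ℓ × Fin r)).filter fun p => p.1 < p.2.1).image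
    fun p => LinearMap.ker (xcoord ℓ p.1 - ζ ^ (p.2.2 : ℕ) • xcoord ℓ p.2.1))

end Arrangement

namespace Arrangement
universe u u' u₁ u₂ v
variable {K : Type v} [Field K] {V : Type u} [AddCommGroup V] [Module K V]

theorem mob_def (L : Finset (Submodule K V)) (X : Submodule K V) :
    mob K L X = if X = ⊤ then 1 else - ∑ Z ∈ (L.filter fun Z => X < Z), mob K L Z := by
  rw [mob]
  congr 1
  rw [← Finset.sum_attach (L.filter fun Z => X < Z) (fun Z => mob K L Z)]

theorem mob_top (L : Finset (Submodule K V)) : mob K L ⊤ = 1 := by rw [mob_def]; simp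

theorem top_mem_lattice (A : Finset (Submodule K V)) : ⊤ ∈ lattice K A := by
  refine Finset.mem_image.2 ⟨∅, by simp, by simp⟩

/-- key Möbius identity -/
theorem sum_mob_filter_le (L : Finset (Submodule K V)) (hT : ⊤ ∈ L)
    {X : Submodule K V} (hX : X ∈ L) :
    ∑ Z ∈ L.filter (fun Z => X ≤ Z), mob K L Z = if X = ⊤ then 1 else 0 := by
  by_cases h : X = ⊤
  · subst h
    have : L.filter (fun Z => (⊤ : Submodule K V) ≤ Z) = {⊤} := by
      ext Z; simp only [Finset.mem_filter, Finset.mem_singleton, top_le_iff]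
      exact ⟨fun h => h.2, fun h => ⟨h.symm ▸ hT, h⟩⟩
    rw [this]; simp [mob_top]
  · rw [if_neg h]
    have hsplit : L.filter (fun Z => X ≤ Z) = insert X (L.filter (fun Z => X < Z)) := by
      ext Z
      simp only [Finset.mem_filter, Finset.mem_insert]
      constructor
      · rintro ⟨hZ, hle⟩
        rcases eq_or_lt_of_le hle with h1 | h1
        · exact Or.inl h1.symm
        · exact Or.inr ⟨hZ, h1⟩
      · rintro (rfl | ⟨hZ, hlt⟩)
        · exact ⟨hX, le_rfl⟩
        · exact ⟨hZ, hlt.le⟩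
    rw [hsplit, Finset.sum_insert (by simp), mob_def, if_neg h]
    ring


theorem mem_lattice_iff {A : Finset (Submodule K V)} {X : Submodule K V} :
    X ∈ lattice K A ↔ ∃ S ⊆ A, S.inf id = X := by
  simp [lattice, Finset.mem_image, Finset.mem_powerset]

theorem inf_le_of_mem_lattice {A : Finset (Submodule K V)} {X : Submodule K V}
    (hX : X ∈ lattice K A) : A.inf id ≤ X := by
  obtain ⟨S, hS, rfl⟩ := mem_lattice_iff.1 hX
  exact Finset.inf_mono hS

theorem IsHyperplane.ne_top {H : Submodule K V} (h : IsHyperplane K H) : H ≠ ⊤ := by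
  obtain ⟨f, hf, rfl⟩ := h
  simpa [LinearMap.ker_eq_top] using hf

theorem IsHyperplane.finrank_add_one [FiniteDimensional K V] {H : Submodule K V}
    (h : IsHyperplane K H) : Module.finrank K H + 1 = Module.finrank K V := by
  obtain ⟨f, hf, rfl⟩ := h
  have hr : LinearMap.range f = ⊤ := by
    obtain ⟨x, hx⟩ : ∃ x, f x ≠ 0 := by
      by_contra h
      push_neg at h
      exact hf (LinearMap.ext fun x => h x)
    rw [Submodule.eq_top_iff']
    intro y
    exact ⟨(y * (f x)⁻¹) • x, by simp [mul_assoc, inv_mul_cancel₀ hx]⟩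
  have := LinearMap.finrank_range_add_finrank_ker f
  rw [hr, finrank_top, Module.finrank_self] at this
  omega

theorem charPoly_eval_one {A : Finset (Submodule K V)}
    (hc : IsCentralArrangement K A) (hne : A ≠ ∅) :
    (charPoly K A).eval 1 = 0 := by
  have : (charPoly K A).eval 1 = ∑ X ∈ lattice K A, mob K (lattice K A) X := by
    rw [charPoly]
    rw [Polynomial.eval_finset_sum]
    push_cast
    simp
  rw [this]
  obtain ⟨H, hH⟩ := Finset.nonempty_iff_ne_empty.2 hne
  have hm : A.inf id ≠ ⊤ := by
    intro h
    have h1 : A.inf id ≤ H := Finset.inf_le (by simpa using hH)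
    rw [h] at h1
    exact (hc H hH).ne_top (top_le_iff.1 h1)
  have hfil : (lattice K A).filter (fun Z => A.inf id ≤ Z) = lattice K A := by
    apply Finset.filter_true_of_mem
    intro X hX
    exact inf_le_of_mem_lattice hX
  have hmem : A.inf id ∈ lattice K A := mem_lattice_iff.2 ⟨A, le_refl _, rfl⟩
  have := sum_mob_filter_le (lattice K A) (top_mem_lattice A) hmem
  rw [hfil, if_neg hm] at this
  exact this

theorem lattice_finrank_lt [FiniteDimensional K V] {A : Finset (Submodule K V)}
    (hc : IsCentralArrangement K A) {X : Submodule K V}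
    (hX : X ∈ lattice K A) (hXt : X ≠ ⊤) :
    Module.finrank K X < Module.finrank K V := by
  obtain ⟨S, hS, rfl⟩ := mem_lattice_iff.1 hX
  obtain ⟨H, hH⟩ : S.Nonempty := by
    rcases S.eq_empty_or_nonempty with rfl | h
    · simp at hXt
    · exact h
  have hHA := hS hH
  have h1 : S.inf id ≤ H := Finset.inf_le (by simpa using hH)
  have h2 : Module.finrank K (S.inf id : Submodule K V) ≤ Module.finrank K H :=
    Submodule.finrank_mono h1
  have h3 := (hc H hHA).finrank_add_one
  omega

theorem charPoly_coeff_finrank [FiniteDimensional K V] {A : Finset (Submodule K V)}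
    (hc : IsCentralArrangement K A) :
    (charPoly K A).coeff (Module.finrank K V) = 1 := by
  rw [charPoly, Polynomial.finset_sum_coeff]
  rw [Finset.sum_eq_single (⊤ : Submodule K V)]
  · simp [Polynomial.coeff_C_mul, Polynomial.coeff_X_pow, finrank_top, mob_top]
  · intro X hX hXt
    have := lattice_finrank_lt hc hX hXt
    rw [Polynomial.coeff_C_mul, Polynomial.coeff_X_pow, if_neg (by omega), mul_zero]
  · intro h
    exact absurd (top_mem_lattice A) h

theorem charPoly_ne_zero [FiniteDimensional K V] {A : Finset (Submodule K V)}
    (hc : IsCentralArrangement K A) : charPoly K A ≠ 0 := by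
  intro h
  have := charPoly_coeff_finrank hc
  rw [h] at this
  simp at this

theorem restrict_central {A : Finset (Submodule K V)} (hc : IsCentralArrangement K A)
    (X : Submodule K V) : IsCentralArrangement K (restrict K A X) := by
  intro H' hH'
  rw [restrict, Finset.mem_image] at hH'
  obtain ⟨H, hH, rfl⟩ := hH'
  rw [Finset.mem_filter] at hH
  obtain ⟨f, hf, rfl⟩ := hc H hH.1
  refine ⟨f.comp X.subtype, ?_, (LinearMap.ker_comp _ _).symm⟩
  intro h
  apply hH.2
  intro x hx
  have : f.comp X.subtype ⟨x, hx⟩ = 0 := by rw [h]; rfl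
  simpa using this

theorem restrict_card_lt {A : Finset (Submodule K V)} {H : Submodule K V} (hH : H ∈ A) :
    (restrict K A H).card < A.card := by
  calc (restrict K A H).card ≤ (A.filter fun H' => ¬ H ≤ H').card :=
        Finset.card_image_le
    _ ≤ (A.erase H).card := by
        apply Finset.card_le_card
        intro H' hH'
        rw [Finset.mem_filter] at hH'
        rw [Finset.mem_erase]
        exact ⟨fun h => hH'.2 (h ▸ le_refl H), hH'.1⟩
    _ < A.card := Finset.card_erase_lt_of_mem hH

theorem charPoly_of_finrank_zero [FiniteDimensional K V] (h : Module.finrank K V = 0)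
    (A : Finset (Submodule K V)) : charPoly K A = 1 := by
  have hsub : Subsingleton V := Module.finrank_zero_iff.1 h
  have hall : ∀ X : Submodule K V, X = ⊤ := fun X => by
    rw [Submodule.eq_top_iff']
    intro x
    rw [Subsingleton.elim x 0]
    exact X.zero_mem
  have hlat : lattice K A = {⊤} := by
    apply Finset.eq_singleton_iff_nonempty_unique_mem.2
    refine ⟨⟨⊤, top_mem_lattice A⟩, fun X _ => hall X⟩
  rw [charPoly, hlat, Finset.sum_singleton, mob_top]
  have : Module.finrank K (⊤ : Submodule K V) = 0 := by rw [finrank_top, h]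
  simp [this]

theorem lattice_empty : lattice K (∅ : Finset (Submodule K V)) = {⊤} := by
  simp [lattice]

theorem charPoly_empty : charPoly K (∅ : Finset (Submodule K V)) =
    Polynomial.X ^ Module.finrank K V := by
  rw [charPoly, lattice_empty, Finset.sum_singleton, mob_top, finrank_top]
  simp

theorem lattice_singleton {H : Submodule K V} (h : H ≠ ⊤) :
    lattice K ({H} : Finset (Submodule K V)) = {⊤, H} := by
  ext X
  simp only [lattice, Finset.mem_image, Finset.mem_powerset, Finset.subset_singleton_iff,
    Finset.mem_insert, Finset.mem_singleton]
  constructor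
  · rintro ⟨S, (rfl | rfl), rfl⟩
    · exact Or.inl (by simp)
    · exact Or.inr (by simp)
  · rintro (rfl | rfl)
    · exact ⟨∅, Or.inl rfl, by simp⟩
    · exact ⟨insert X ∅, Or.inr rfl, by simp⟩

theorem charPoly_singleton {H : Submodule K V} (h : H ≠ ⊤) :
    charPoly K ({H} : Finset (Submodule K V)) =
      Polynomial.X ^ Module.finrank K V - Polynomial.X ^ Module.finrank K H := by
  have hlat := lattice_singleton h
  have hmobH : mob K ({⊤, H} : Finset (Submodule K V)) H = -1 := by
    rw [mob_def, if_neg h]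
    have : ({⊤, H} : Finset (Submodule K V)).filter (fun Z => H < Z) = {⊤} := by
      ext Z
      simp only [Finset.mem_filter, Finset.mem_insert, Finset.mem_singleton]
      constructor
      · rintro ⟨rfl | rfl, h2⟩
        · rfl
        · exact absurd h2 (lt_irrefl _)
      · rintro rfl
        exact ⟨Or.inl rfl, lt_top_iff_ne_top.2 h⟩
    rw [this, Finset.sum_singleton, mob_top]
  rw [charPoly, hlat, Finset.sum_insert (by simpa using (Ne.symm h)), Finset.sum_singleton,
    mob_top, hmobH, finrank_top]
  simp only [Polynomial.C_1, map_neg]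
  ring

theorem mem_restrict {A : Finset (Submodule K V)} {X : Submodule K V}
    {Y : Submodule K X} : Y ∈ restrict K A X ↔
      ∃ H ∈ A, ¬ X ≤ H ∧ H.comap X.subtype = Y := by
  simp [restrict, Finset.mem_image, Finset.mem_filter, and_assoc]

theorem restrict_ne_top {A : Finset (Submodule K V)} {X : Submodule K V}
    {Y : Submodule K X} (hY : Y ∈ restrict K A X) : Y ≠ ⊤ := by
  obtain ⟨H, _, hXH, rfl⟩ := mem_restrict.1 hY
  intro h
  exact hXH (Submodule.comap_subtype_eq_top.1 h)

/-- Division in dimension at most 2. -/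
theorem charPoly_restrict_dvd_of_low [FiniteDimensional K V]
    {A : Finset (Submodule K V)} (hc : IsCentralArrangement K A)
    (hV : Module.finrank K V ≤ 2) {H : Submodule K V} (hH : H ∈ A) :
    charPoly K (restrict K A H) ∣ charPoly K A := by
  have hfr := (hc H hH).finrank_add_one
  rcases Nat.lt_or_ge (Module.finrank K H) 1 with h0 | h1
  · rw [charPoly_of_finrank_zero (by omega)]
    exact one_dvd _
  · -- finrank H = 1, finrank V = 2
    have hfH : Module.finrank K H = 1 := by
      have := Submodule.finrank_le H
      omega
    have hfV : Module.finrank K V = 2 := by omega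
    by_cases hres : restrict K A H = ∅
    · -- A = {H}
      have hA : A = {H} := by
        apply Finset.eq_singleton_iff_unique_mem.2
        refine ⟨hH, fun H' hH' => ?_⟩
        have hle : H ≤ H' := by
          by_contra hle
          have : H'.comap H.subtype ∈ restrict K A H :=
            mem_restrict.2 ⟨H', hH', hle, rfl⟩
          rw [hres] at this
          simp at this
        have : Module.finrank K H = Module.finrank K H' := by
          have := (hc H' hH').finrank_add_one
          omega
        exact (Submodule.eq_of_le_of_finrank_eq hle this).symm
      rw [hres, charPoly_empty, hA, charPoly_singleton (hc H hH).ne_top, hfH, hfV]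
      exact ⟨Polynomial.X - 1, by ring⟩
    · -- restrict = {⊥}
      have hrb : restrict K A H = {(⊥ : Submodule K H)} := by
        obtain ⟨Y, hY⟩ := Finset.nonempty_iff_ne_empty.2 hres
        have hone : ∀ Z ∈ restrict K A H, Z = (⊥ : Submodule K H) := by
          intro Z hZ
          have hZt := restrict_ne_top hZ
          have : Module.finrank K Z ≠ 1 := by
            intro h
            apply hZt
            apply Submodule.eq_of_le_of_finrank_eq le_top
            rw [h, finrank_top, hfH]
          have hle : Module.finrank K Z ≤ 1 := hfH ▸ Submodule.finrank_le Z
          exact Submodule.finrank_eq_zero.1 (by omega)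
        apply Finset.eq_singleton_iff_unique_mem.2
        exact ⟨(hone Y hY) ▸ hY, hone⟩
      have hbt : (⊥ : Submodule K H) ≠ ⊤ := by
        intro h
        have := finrank_top K H
        rw [← h, finrank_bot, hfH] at this
        omega
      rw [hrb, charPoly_singleton hbt, hfH, finrank_bot]
      have : (Polynomial.X ^ 1 - Polynomial.X ^ 0 : Polynomial ℤ) =
          Polynomial.X - Polynomial.C 1 := by
        simp
      rw [this, Polynomial.dvd_iff_isRoot]
      exact charPoly_eval_one hc (Finset.nonempty_iff_ne_empty.1 ⟨H, hH⟩)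

theorem filter_lt_card_lt {V : Type u'} [AddCommGroup V] [Module K V]
    {M : Finset (Submodule K V)} {Y Z : Submodule K V} (hZ : Z ∈ M) (hYZ : Y < Z) :
    (M.filter fun T => Z < T).card < (M.filter fun T => Y < T).card := by
  refine Finset.card_lt_card ((Finset.ssubset_iff_of_subset ?_).mpr ?_)
  · intro T hT
    rw [Finset.mem_filter] at hT ⊢
    exact ⟨hT.1, lt_trans hYZ hT.2⟩
  · exact ⟨Z, Finset.mem_filter.mpr ⟨hZ, hYZ⟩,
      fun h => absurd (Finset.mem_filter.mp h).2 (lt_irrefl _)⟩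

section Iso
variable {W : Type u'} [AddCommGroup W] [Module K W]

theorem map_equiv_mem_iff (e : V ≃ₗ[K] W) {X : Submodule K V} {x : V} :
    e x ∈ X.map (e : V →ₗ[K] W) ↔ x ∈ X := by
  constructor
  · rintro ⟨y, hy, hxy⟩
    have : y = x := e.injective (by simpa using hxy)
    rwa [← this]
  · intro hx
    exact ⟨x, hx, rfl⟩

theorem map_equiv_injective (e : V ≃ₗ[K] W) :
    Function.Injective (fun X : Submodule K V => X.map (e : V →ₗ[K] W)) := by
  intro X Y h
  ext x
  rw [← map_equiv_mem_iff e (X := X), ← map_equiv_mem_iff e (X := Y)]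
  simp only [] at h
  rw [h]

theorem map_equiv_top (e : V ≃ₗ[K] W) :
    (⊤ : Submodule K V).map (e : V →ₗ[K] W) = ⊤ := by
  rw [Submodule.map_top, LinearMap.range_eq_top]
  exact e.surjective

theorem map_equiv_le_iff (e : V ≃ₗ[K] W) {X Y : Submodule K V} :
    X.map (e : V →ₗ[K] W) ≤ Y.map (e : V →ₗ[K] W) ↔ X ≤ Y :=
  Submodule.map_le_map_iff_of_injective e.injective _ _

theorem map_equiv_lt_iff (e : V ≃ₗ[K] W) {X Y : Submodule K V} :
    X.map (e : V →ₗ[K] W) < Y.map (e : V →ₗ[K] W) ↔ X < Y := by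
  rw [lt_iff_le_not_ge, lt_iff_le_not_ge, map_equiv_le_iff, map_equiv_le_iff]

theorem map_equiv_eq_top_iff (e : V ≃ₗ[K] W) {X : Submodule K V} :
    X.map (e : V →ₗ[K] W) = ⊤ ↔ X = ⊤ := by
  constructor
  · intro h
    apply map_equiv_injective e
    show X.map (e : V →ₗ[K] W) = (⊤ : Submodule K V).map (e : V →ₗ[K] W)
    rw [h, map_equiv_top]
  · rintro rfl
    exact map_equiv_top e

theorem map_equiv_finset_inf (e : V ≃ₗ[K] W) (S : Finset (Submodule K V)) :
    (S.inf id).map (e : V →ₗ[K] W) = S.inf (fun H => H.map (e : V →ₗ[K] W)) := by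
  classical
  induction S using Finset.induction with
  | empty => simpa using map_equiv_top e
  | insert _ _ hx ih =>
    rw [Finset.inf_insert, Finset.inf_insert, Submodule.map_inf (e : V →ₗ[K] W) e.injective, ih]
    rfl

theorem lattice_image (e : V ≃ₗ[K] W) (A : Finset (Submodule K V)) :
    lattice K (A.image fun H => H.map (e : V →ₗ[K] W)) =
      (lattice K A).image (fun H => H.map (e : V →ₗ[K] W)) := by
  ext X
  rw [mem_lattice_iff, Finset.mem_image]
  constructor
  · rintro ⟨S, hS, rfl⟩
    set T := A.filter (fun H => H.map (e : V →ₗ[K] W) ∈ S) with hT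
    have hTS : T.image (fun H => H.map (e : V →ₗ[K] W)) = S := by
      ext Y
      simp only [Finset.mem_image, hT, Finset.mem_filter]
      constructor
      · rintro ⟨H, ⟨_, h2⟩, rfl⟩
        exact h2
      · intro hY
        obtain ⟨H, hHA, rfl⟩ := Finset.mem_image.1 (hS hY)
        exact ⟨H, ⟨hHA, hY⟩, rfl⟩
    refine ⟨T.inf id, mem_lattice_iff.2 ⟨T, Finset.filter_subset _ _, rfl⟩, ?_⟩
    rw [map_equiv_finset_inf, ← hTS, Finset.inf_image]
    rfl
  · rintro ⟨Y, hY, rfl⟩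
    obtain ⟨S, hS, rfl⟩ := mem_lattice_iff.1 hY
    refine ⟨S.image (fun H => H.map (e : V →ₗ[K] W)), Finset.image_subset_image hS, ?_⟩
    rw [Finset.inf_image, map_equiv_finset_inf]
    rfl

theorem mob_image (e : V ≃ₗ[K] W) (L : Finset (Submodule K V)) (X : Submodule K V) :
    mob K (L.image fun H => H.map (e : V →ₗ[K] W)) (X.map (e : V →ₗ[K] W)) =
      mob K L X := by
  set F := fun H : Submodule K V => H.map (e : V →ₗ[K] W) with hF
  have hFinj : Function.Injective F := map_equiv_injective e
  suffices key : ∀ (k : ℕ) (X : Submodule K V),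
      ((L.image F).filter (fun Z => F X < Z)).card ≤ k →
      mob K (L.image F) (F X) = mob K L X by
    exact key _ X le_rfl
  intro k
  induction k with
  | zero =>
    intro X hcard
    by_cases h : X = ⊤
    · subst h
      rw [show F ⊤ = ⊤ from map_equiv_top e, mob_top, mob_top]
    · have hfil : (L.image F).filter (fun Z => F X < Z) = ∅ :=
        Finset.card_eq_zero.1 (Nat.le_zero.1 hcard)
      have hfil2 : L.filter (fun Z => X < Z) = ∅ := by
        rw [Finset.eq_empty_iff_forall_notMem]
        intro Z hZ
        rw [Finset.mem_filter] at hZ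
        have : F Z ∈ (L.image F).filter (fun Z => F X < Z) :=
          Finset.mem_filter.2 ⟨Finset.mem_image_of_mem F hZ.1, (map_equiv_lt_iff e).2 hZ.2⟩
        rw [hfil] at this
        simp at this
      rw [mob_def, if_neg ((map_equiv_eq_top_iff e).not.2 h), mob_def, if_neg h, hfil, hfil2]
      simp
  | succ k ih =>
    intro X hcard
    by_cases h : X = ⊤
    · subst h
      rw [show F ⊤ = ⊤ from map_equiv_top e, mob_top, mob_top]
    · rw [mob_def, if_neg ((map_equiv_eq_top_iff e).not.2 h), mob_def, if_neg h]
      congr 1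
      rw [Finset.filter_image]
      have hcong : L.filter (fun Z => F X < F Z) = L.filter (fun Z => X < Z) := by
        apply Finset.filter_congr
        intro Z _
        exact map_equiv_lt_iff e
      rw [hcong, Finset.sum_image (fun a _ b _ h => hFinj h)]
      apply Finset.sum_congr rfl
      intro Z hZ
      rw [Finset.mem_filter] at hZ
      apply ih
      have hlt : ((L.image F).filter (fun T => F Z < T)).card <
          ((L.image F).filter (fun T => F X < T)).card :=
        filter_lt_card_lt (Finset.mem_image_of_mem F hZ.1) ((map_equiv_lt_iff e).2 hZ.2)
      omega

theorem charPoly_image (e : V ≃ₗ[K] W) (A : Finset (Submodule K V)) :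
    charPoly K (A.image fun H => H.map (e : V →ₗ[K] W)) = charPoly K A := by
  rw [charPoly, charPoly, lattice_image e A,
    Finset.sum_image (fun a _ b _ h => map_equiv_injective e h)]
  apply Finset.sum_congr rfl
  intro X hX
  rw [mob_image e, LinearEquiv.finrank_map_eq]

theorem comap_map_submoduleMap (e : V ≃ₗ[K] W) (X H : Submodule K V) :
    (H.map (e : V →ₗ[K] W)).comap (X.map (e : V →ₗ[K] W)).subtype =
      (H.comap X.subtype).map
        ((e.submoduleMap X) : X →ₗ[K] (X.map (e : V →ₗ[K] W))) := by
  ext y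
  obtain ⟨y, hy⟩ := y
  simp only [Submodule.mem_comap, Submodule.mem_map, Submodule.subtype_apply]
  constructor
  · rintro ⟨x, hxH, hxy⟩
    simp only [LinearEquiv.coe_coe] at hxy
    obtain ⟨v, hvX, hvy⟩ := hy
    have hxv : x = v := e.injective (by rw [hxy]; exact hvy.symm ▸ rfl)
    refine ⟨⟨x, hxv ▸ hvX⟩, hxH, Subtype.ext ?_⟩
    simpa using hxy
  · rintro ⟨x, hxH, hxy⟩
    refine ⟨↑x, hxH, ?_⟩
    have := congrArg Subtype.val hxy
    simpa using this

theorem restrict_image (e : V ≃ₗ[K] W) (A : Finset (Submodule K V)) (X : Submodule K V) :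
    restrict K (A.image fun H => H.map (e : V →ₗ[K] W)) (X.map (e : V →ₗ[K] W)) =
      (restrict K A X).image
        (fun Y => Y.map ((e.submoduleMap X) : X →ₗ[K] (X.map (e : V →ₗ[K] W)))) := by
  rw [restrict, restrict, Finset.filter_image, Finset.image_image, Finset.image_image]
  rw [Finset.filter_congr (q := fun H => ¬ X ≤ H)
    (fun H _ => by rw [not_iff_not]; exact map_equiv_le_iff e)]
  apply Finset.image_congr
  intro H hH
  exact comap_map_submoduleMap e X H

end Iso

section Aux

theorem divFreeAux_zero {V : Type u} [AddCommGroup V] [Module K V]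
    {A : Finset (Submodule K V)} :
    DivFreeAux K 0 V A ↔ (Module.finrank K V ≤ 2 ∨ A = ∅) := Iff.rfl

theorem divFreeAux_succ {n : ℕ} {V : Type u} [AddCommGroup V] [Module K V]
    {A : Finset (Submodule K V)} :
    DivFreeAux K (n + 1) V A ↔ (Module.finrank K V ≤ 2 ∨ A = ∅ ∨
      ∃ H ∈ A, DivFreeAux K n H (restrict K A H) ∧
        charPoly K (restrict K A H) ∣ charPoly K A) := Iff.rfl

theorem divFreeAux_of_le2 {V : Type u} [AddCommGroup V] [Module K V]
    (n : ℕ) {A : Finset (Submodule K V)} (h : Module.finrank K V ≤ 2) :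
    DivFreeAux K n V A := by
  cases n with
  | zero => exact Or.inl h
  | succ n => exact Or.inl h

theorem divFreeAux_of_empty {V : Type u} [AddCommGroup V] [Module K V] (n : ℕ) :
    DivFreeAux K n V (∅ : Finset (Submodule K V)) := by
  cases n with
  | zero => exact Or.inr rfl
  | succ n => exact Or.inr (Or.inl rfl)

theorem divFreeAux_succ_mono (n : ℕ) :
    ∀ {V : Type u} [AddCommGroup V] [Module K V] {A : Finset (Submodule K V)},
      DivFreeAux K n V A → DivFreeAux K (n + 1) V A := by
  induction n with
  | zero =>
    intro V _ _ A h
    rcases h with h | h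
    · exact Or.inl h
    · exact Or.inr (Or.inl h)
  | succ n ih =>
    intro V _ _ A h
    rcases h with h | h | ⟨H, hH, hrec, hdvd⟩
    · exact Or.inl h
    · exact Or.inr (Or.inl h)
    · exact Or.inr (Or.inr ⟨H, hH, ih hrec, hdvd⟩)

theorem divFreeAux_mono {n m : ℕ} (hnm : n ≤ m) {V : Type u} [AddCommGroup V]
    [Module K V] {A : Finset (Submodule K V)}
    (h : DivFreeAux K n V A) : DivFreeAux K m V A := by
  induction hnm with
  | refl => exact h
  | step _ ih => exact divFreeAux_succ_mono _ ih

theorem divFreeAux_image (n : ℕ) :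
    ∀ {V : Type u} [AddCommGroup V] [Module K V]
      {W : Type u'} [AddCommGroup W] [Module K W]
      (e : V ≃ₗ[K] W) (A : Finset (Submodule K V)),
      DivFreeAux K n V A →
        DivFreeAux K n W (A.image fun H => H.map (e : V →ₗ[K] W)) := by
  induction n with
  | zero =>
    intro V _ _ W _ _ e A h
    rcases h with h | h
    · exact Or.inl (e.finrank_eq ▸ h)
    · exact Or.inr (by rw [h, Finset.image_empty])
  | succ n ih =>
    intro V _ _ W _ _ e A h
    rcases h with h | h | ⟨H, hH, hrec, hdvd⟩
    · exact Or.inl (e.finrank_eq ▸ h)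
    · exact Or.inr (Or.inl (by rw [h, Finset.image_empty]))
    · refine Or.inr (Or.inr ⟨H.map (e : V →ₗ[K] W),
        Finset.mem_image_of_mem _ hH, ?_, ?_⟩)
      · rw [restrict_image e A H]
        exact ih (e.submoduleMap H) (restrict K A H) hrec
      · rw [restrict_image e A H, charPoly_image (e.submoduleMap H),
          charPoly_image e]
        exact hdvd

theorem divFreeAux_down (m : ℕ) :
    ∀ {V : Type u} [AddCommGroup V] [Module K V] [FiniteDimensional K V]
      {A : Finset (Submodule K V)} (_ : IsCentralArrangement K A) (n : ℕ)
      (_ : Module.finrank K V ≤ n + 2),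
      DivFreeAux K m V A → DivFreeAux K n V A := by
  induction m with
  | zero =>
    intro V _ _ _ A hc n hn h
    rcases h with h | h
    · exact divFreeAux_of_le2 n h
    · rw [h]; exact divFreeAux_of_empty n
  | succ m ih =>
    intro V _ _ _ A hc n hn h
    rcases h with h | h | ⟨H, hH, hrec, hdvd⟩
    · exact divFreeAux_of_le2 n h
    · rw [h]; exact divFreeAux_of_empty n
    · by_cases h2 : Module.finrank K V ≤ 2
      · exact divFreeAux_of_le2 n h2
      · cases n with
        | zero => omega
        | succ n' =>
          have hfr := (hc H hH).finrank_add_one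
          have : DivFreeAux K n' H (restrict K A H) :=
            ih (restrict_central hc H) n' (by omega) hrec
          exact Or.inr (Or.inr ⟨H, hH, this, hdvd⟩)

end Aux

section Prod
variable {V₁ : Type u₁} [AddCommGroup V₁] [Module K V₁]
  {V₂ : Type u₂} [AddCommGroup V₂] [Module K V₂]

theorem mem_prodArr {A₁ : Finset (Submodule K V₁)} {A₂ : Finset (Submodule K V₂)}
    {H : Submodule K (V₁ × V₂)} :
    H ∈ prodArr K A₁ A₂ ↔ (∃ H₁ ∈ A₁, H₁.prod ⊤ = H) ∨ (∃ H₂ ∈ A₂, Submodule.prod ⊤ H₂ = H) := by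
  simp [prodArr, Finset.mem_union, Finset.mem_image]

theorem prod_left_injective {p p' : Submodule K V₁} {q q' : Submodule K V₂}
    (h : p.prod q = p'.prod q') : p = p' ∧ q = q' := by
  constructor
  · ext x
    have h1 : ((x, 0) : V₁ × V₂) ∈ p.prod q ↔ ((x, 0) : V₁ × V₂) ∈ p'.prod q' := by rw [h]
    simpa [Submodule.mem_prod] using h1
  · ext y
    have h1 : ((0, y) : V₁ × V₂) ∈ p.prod q ↔ ((0, y) : V₁ × V₂) ∈ p'.prod q' := by rw [h]
    simpa [Submodule.mem_prod] using h1

theorem prod_le_prod_iff' {p p' : Submodule K V₁} {q q' : Submodule K V₂} :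
    p.prod q ≤ p'.prod q' ↔ p ≤ p' ∧ q ≤ q' := by
  constructor
  · intro h
    constructor
    · intro x hx
      have := h (Submodule.mem_prod.2 ⟨hx, (q.zero_mem : (0:V₂) ∈ q)⟩ :
        ((x, 0) : V₁ × V₂) ∈ p.prod q)
      exact (Submodule.mem_prod.1 this).1
    · intro y hy
      have := h (Submodule.mem_prod.2 ⟨(p.zero_mem : (0:V₁) ∈ p), hy⟩ :
        ((0, y) : V₁ × V₂) ∈ p.prod q)
      exact (Submodule.mem_prod.1 this).2
  · rintro ⟨h1, h2⟩ x hx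
    rw [Submodule.mem_prod] at hx ⊢
    exact ⟨h1 hx.1, h2 hx.2⟩

theorem prod_inf_prod' {p p' : Submodule K V₁} {q q' : Submodule K V₂} :
    p.prod q ⊓ p'.prod q' = (p ⊓ p').prod (q ⊓ q') := by
  ext x
  simp only [Submodule.mem_inf, Submodule.mem_prod]
  tauto

theorem prodArr_central {A₁ : Finset (Submodule K V₁)} {A₂ : Finset (Submodule K V₂)}
    (h₁ : IsCentralArrangement K A₁) (h₂ : IsCentralArrangement K A₂) :
    IsCentralArrangement K (prodArr K A₁ A₂) := by
  intro H hH
  rcases mem_prodArr.1 hH with ⟨H₁, hH₁, rfl⟩ | ⟨H₂, hH₂, rfl⟩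
  · obtain ⟨f, hf, rfl⟩ := h₁ H₁ hH₁
    refine ⟨f.comp (LinearMap.fst K V₁ V₂), ?_, ?_⟩
    · intro h
      apply hf
      ext x
      have : f.comp (LinearMap.fst K V₁ V₂) (x, 0) = 0 := by rw [h]; rfl
      simpa using this
    · ext x
      simp [Submodule.mem_prod, LinearMap.mem_ker]
  · obtain ⟨f, hf, rfl⟩ := h₂ H₂ hH₂
    refine ⟨f.comp (LinearMap.snd K V₁ V₂), ?_, ?_⟩
    · intro h
      apply hf
      ext x
      have : f.comp (LinearMap.snd K V₁ V₂) (0, x) = 0 := by rw [h]; rfl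
      simpa using this
    · ext x
      simp [Submodule.mem_prod, LinearMap.mem_ker]

theorem inf_image_prod_top (S : Finset (Submodule K V₁)) :
    (S.image fun H : Submodule K V₁ => H.prod (⊤ : Submodule K V₂)).inf id =
      (S.inf id).prod ⊤ := by
  classical
  induction S using Finset.induction with
  | empty =>
    simp only [Finset.image_empty, Finset.inf_empty]
    ext x
    simp [Submodule.mem_prod]
  | insert _ _ hx ih =>
    rw [Finset.image_insert, Finset.inf_insert, Finset.inf_insert, ih, id, id,
      prod_inf_prod', inf_top_eq]

theorem inf_image_top_prod (S : Finset (Submodule K V₂)) :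
    (S.image fun H : Submodule K V₂ => Submodule.prod (⊤ : Submodule K V₁) H).inf id =
      Submodule.prod ⊤ (S.inf id) := by
  classical
  induction S using Finset.induction with
  | empty =>
    simp only [Finset.image_empty, Finset.inf_empty]
    ext x
    simp [Submodule.mem_prod]
  | insert _ _ hx ih =>
    rw [Finset.image_insert, Finset.inf_insert, Finset.inf_insert, ih, id, id,
      prod_inf_prod', inf_top_eq]

theorem lattice_prodArr (A₁ : Finset (Submodule K V₁)) (A₂ : Finset (Submodule K V₂)) :
    lattice K (prodArr K A₁ A₂) =
      ((lattice K A₁) ×ˢ (lattice K A₂)).image (fun p => p.1.prod p.2) := by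
  ext X
  rw [mem_lattice_iff, Finset.mem_image]
  constructor
  · rintro ⟨S, hS, rfl⟩
    set S₁ := A₁.filter (fun H => H.prod (⊤ : Submodule K V₂) ∈ S) with hS₁
    set S₂ := A₂.filter (fun H => Submodule.prod (⊤ : Submodule K V₁) H ∈ S) with hS₂
    have hdecomp : S = (S₁.image fun H => H.prod (⊤ : Submodule K V₂)) ∪
        (S₂.image fun H => Submodule.prod (⊤ : Submodule K V₁) H) := by
      ext Y
      simp only [Finset.mem_union, Finset.mem_image, hS₁, hS₂, Finset.mem_filter]
      constructor
      · intro hY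
        rcases mem_prodArr.1 (hS hY) with ⟨H₁, hH₁, rfl⟩ | ⟨H₂, hH₂, rfl⟩
        · exact Or.inl ⟨H₁, ⟨hH₁, hY⟩, rfl⟩
        · exact Or.inr ⟨H₂, ⟨hH₂, hY⟩, rfl⟩
      · rintro (⟨H, ⟨_, hmem⟩, rfl⟩ | ⟨H, ⟨_, hmem⟩, rfl⟩) <;> exact hmem
    refine ⟨(S₁.inf id, S₂.inf id), ?_, ?_⟩
    · rw [Finset.mem_product]
      exact ⟨mem_lattice_iff.2 ⟨S₁, Finset.filter_subset _ _, rfl⟩,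
        mem_lattice_iff.2 ⟨S₂, Finset.filter_subset _ _, rfl⟩⟩
    · rw [hdecomp, Finset.inf_union, inf_image_prod_top, inf_image_top_prod,
        prod_inf_prod', inf_top_eq, top_inf_eq]
  · rintro ⟨⟨X₁, X₂⟩, hmem, rfl⟩
    rw [Finset.mem_product] at hmem
    obtain ⟨S₁, hS₁, rfl⟩ := mem_lattice_iff.1 hmem.1
    obtain ⟨S₂, hS₂, rfl⟩ := mem_lattice_iff.1 hmem.2
    refine ⟨(S₁.image fun H => H.prod (⊤ : Submodule K V₂)) ∪
        (S₂.image fun H => Submodule.prod (⊤ : Submodule K V₁) H), ?_, ?_⟩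
    · intro Y hY
      rcases Finset.mem_union.1 hY with hY | hY
      · obtain ⟨H, hH, rfl⟩ := Finset.mem_image.1 hY
        exact Finset.mem_union.2 (Or.inl (Finset.mem_image_of_mem _ (hS₁ hH)))
      · obtain ⟨H, hH, rfl⟩ := Finset.mem_image.1 hY
        exact Finset.mem_union.2 (Or.inr (Finset.mem_image_of_mem _ (hS₂ hH)))
    · rw [Finset.inf_union, inf_image_prod_top, inf_image_top_prod,
        prod_inf_prod', inf_top_eq, top_inf_eq]

theorem prodArr_eq_empty_iff {A₁ : Finset (Submodule K V₁)} {A₂ : Finset (Submodule K V₂)} :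
    prodArr K A₁ A₂ = ∅ ↔ A₁ = ∅ ∧ A₂ = ∅ := by
  rw [prodArr, Finset.union_eq_empty, Finset.image_eq_empty, Finset.image_eq_empty]

end Prod

section ProdChar
variable {V₁ : Type u₁} [AddCommGroup V₁] [Module K V₁]
  {V₂ : Type u₂} [AddCommGroup V₂] [Module K V₂]

theorem prod_eq_top_iff'' {p : Submodule K V₁} {q : Submodule K V₂} :
    p.prod q = ⊤ ↔ p = ⊤ ∧ q = ⊤ := by
  constructor
  · intro h
    constructor
    · rw [Submodule.eq_top_iff']
      intro x
      exact (Submodule.mem_prod.1 (h ▸ Submodule.mem_top : ((x, 0) : V₁ × V₂) ∈ p.prod q)).1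
    · rw [Submodule.eq_top_iff']
      intro y
      exact (Submodule.mem_prod.1 (h ▸ Submodule.mem_top : ((0, y) : V₁ × V₂) ∈ p.prod q)).2
  · rintro ⟨rfl, rfl⟩
    rw [Submodule.eq_top_iff']
    intro x
    exact Submodule.mem_prod.2 ⟨trivial, trivial⟩

theorem prod_fn_injective :
    Function.Injective (fun p : Submodule K V₁ × Submodule K V₂ => p.1.prod p.2) := by
  intro a b h
  obtain ⟨h1, h2⟩ := prod_left_injective h
  exact Prod.ext h1 h2

theorem mob_prod {L₁ : Finset (Submodule K V₁)} {L₂ : Finset (Submodule K V₂)}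
    (hT₁ : ⊤ ∈ L₁) (hT₂ : ⊤ ∈ L₂) {X₁ : Submodule K V₁} {X₂ : Submodule K V₂}
    (hX₁ : X₁ ∈ L₁) (hX₂ : X₂ ∈ L₂) :
    mob K ((L₁ ×ˢ L₂).image fun p => p.1.prod p.2) (X₁.prod X₂) =
      mob K L₁ X₁ * mob K L₂ X₂ := by
  set Lp := (L₁ ×ˢ L₂).image fun p : Submodule K V₁ × Submodule K V₂ => p.1.prod p.2
    with hLp
  suffices key : ∀ (k : ℕ) (X₁ : Submodule K V₁) (X₂ : Submodule K V₂),
      X₁ ∈ L₁ → X₂ ∈ L₂ →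
      (Lp.filter (fun Z => X₁.prod X₂ < Z)).card ≤ k →
      mob K Lp (X₁.prod X₂) = mob K L₁ X₁ * mob K L₂ X₂ by
    exact key _ X₁ X₂ hX₁ hX₂ le_rfl
  intro k
  induction k with
  | zero =>
    intro X₁ X₂ hX₁ hX₂ hcard
    -- the filter is empty; X₁.prod X₂ must be ⊤ (since ⊤.prod ⊤ ∈ Lp is above everything)
    by_cases h : X₁.prod X₂ = ⊤
    · obtain ⟨h1, h2⟩ := prod_eq_top_iff''.1 h
      rw [h, mob_top, h1, h2, mob_top, mob_top]
      norm_num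
    · exfalso
      have hTp : (⊤ : Submodule K V₁).prod (⊤ : Submodule K V₂) ∈ Lp :=
        Finset.mem_image.2 ⟨(⊤, ⊤), Finset.mem_product.2 ⟨hT₁, hT₂⟩, rfl⟩
      have hTT : (⊤ : Submodule K V₁).prod (⊤ : Submodule K V₂) = ⊤ :=
        prod_eq_top_iff''.2 ⟨rfl, rfl⟩
      have : X₁.prod X₂ < ⊤ := lt_top_iff_ne_top.2 h
      have hmem : (⊤ : Submodule K (V₁ × V₂)) ∈ Lp.filter (fun Z => X₁.prod X₂ < Z) :=
        Finset.mem_filter.2 ⟨hTT ▸ hTp, this⟩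
      have := Finset.card_eq_zero.1 (Nat.le_zero.1 hcard)
      rw [this] at hmem
      simp at hmem
  | succ k ih =>
    intro X₁ X₂ hX₁ hX₂ hcard
    by_cases h : X₁.prod X₂ = ⊤
    · obtain ⟨h1, h2⟩ := prod_eq_top_iff''.1 h
      rw [h, mob_top, h1, h2, mob_top, mob_top]
      norm_num
    · rw [mob_def, if_neg h]
      have hfil : Lp.filter (fun Z => X₁.prod X₂ < Z) =
          (((L₁ ×ˢ L₂).filter (fun p => X₁.prod X₂ < p.1.prod p.2)).image
            fun p : Submodule K V₁ × Submodule K V₂ => p.1.prod p.2) := by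
        rw [hLp, Finset.filter_image]
      rw [hfil, Finset.sum_image (fun a _ b _ hab => prod_fn_injective hab)]
      have hsum : ∀ p ∈ (L₁ ×ˢ L₂).filter (fun p => X₁.prod X₂ < p.1.prod p.2),
          mob K Lp (p.1.prod p.2) = mob K L₁ p.1 * mob K L₂ p.2 := by
        intro p hp
        rw [Finset.mem_filter, Finset.mem_product] at hp
        apply ih p.1 p.2 hp.1.1 hp.1.2
        have := filter_lt_card_lt (M := Lp)
          (Finset.mem_image_of_mem _ (Finset.mem_product.2 ⟨hp.1.1, hp.1.2⟩)) hp.2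
        rw [hfil] at hcard
        rw [hfil] at this
        omega
      rw [Finset.sum_congr rfl hsum]
      -- now the combinatorial identity
      have hD : (L₁ ×ˢ L₂).filter (fun p => X₁.prod X₂ < p.1.prod p.2) =
          ((L₁.filter (fun Z => X₁ ≤ Z)) ×ˢ (L₂.filter (fun Z => X₂ ≤ Z))).erase (X₁, X₂) := by
        ext p
        rw [Finset.mem_filter, Finset.mem_product, Finset.mem_erase, Finset.mem_product,
          Finset.mem_filter, Finset.mem_filter]
        constructor
        · rintro ⟨⟨h1, h2⟩, hlt⟩
          obtain ⟨hle, hne⟩ := lt_iff_le_and_ne.1 hlt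
          obtain ⟨hle1, hle2⟩ := prod_le_prod_iff'.1 hle
          refine ⟨?_, ⟨h1, hle1⟩, ⟨h2, hle2⟩⟩
          intro hp
          apply hne
          rw [hp]
        · rintro ⟨hne, ⟨h1, hle1⟩, ⟨h2, hle2⟩⟩
          refine ⟨⟨h1, h2⟩, lt_iff_le_and_ne.2 ⟨prod_le_prod_iff'.2 ⟨hle1, hle2⟩, ?_⟩⟩
          intro heq
          apply hne
          exact (Prod.ext (prod_left_injective heq).1 (prod_left_injective heq).2).symm
      rw [hD, Finset.sum_erase_eq_sub (a := (X₁, X₂)) (Finset.mem_product.2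
        ⟨Finset.mem_filter.2 ⟨hX₁, le_rfl⟩, Finset.mem_filter.2 ⟨hX₂, le_rfl⟩⟩)]
      have hprodsum : ∑ p ∈ (L₁.filter (fun Z => X₁ ≤ Z)) ×ˢ (L₂.filter (fun Z => X₂ ≤ Z)),
          mob K L₁ p.1 * mob K L₂ p.2 =
          (∑ Z ∈ L₁.filter (fun Z => X₁ ≤ Z), mob K L₁ Z) *
          (∑ Z ∈ L₂.filter (fun Z => X₂ ≤ Z), mob K L₂ Z) := by
        rw [Finset.sum_mul_sum]
        rw [Finset.sum_product]
      rw [hprodsum, sum_mob_filter_le L₁ hT₁ hX₁, sum_mob_filter_le L₂ hT₂ hX₂]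
      have : ¬ (X₁ = ⊤ ∧ X₂ = ⊤) := fun hc => h (prod_eq_top_iff''.2 hc)
      by_cases h1 : X₁ = ⊤
      · have h2 : X₂ ≠ ⊤ := fun h2 => this ⟨h1, h2⟩
        rw [if_pos h1, if_neg h2]
        ring
      · rw [if_neg h1]
        ring

/-- The linear equivalence between `↥(p.prod q)` and `↥p × ↥q`. -/
def prodSubEquiv (p : Submodule K V₁) (q : Submodule K V₂) :
    (p.prod q : Submodule K (V₁ × V₂)) ≃ₗ[K] (↥p × ↥q) where
  toFun x := (⟨x.1.1, ((Submodule.mem_prod).1 x.2).1⟩, ⟨x.1.2, ((Submodule.mem_prod).1 x.2).2⟩)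
  invFun y := ⟨(y.1.1, y.2.1), (Submodule.mem_prod).2 ⟨y.1.2, y.2.2⟩⟩
  map_add' x y := rfl
  map_smul' c x := rfl
  left_inv x := rfl
  right_inv y := rfl

theorem finrank_prod_sub [FiniteDimensional K V₁] [FiniteDimensional K V₂]
    (p : Submodule K V₁) (q : Submodule K V₂) :
    Module.finrank K (p.prod q : Submodule K (V₁ × V₂)) =
      Module.finrank K p + Module.finrank K q := by
  rw [(prodSubEquiv p q).finrank_eq, Module.finrank_prod]

theorem charPoly_prodArr [FiniteDimensional K V₁] [FiniteDimensional K V₂]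
    (A₁ : Finset (Submodule K V₁)) (A₂ : Finset (Submodule K V₂)) :
    charPoly K (prodArr K A₁ A₂) = charPoly K A₁ * charPoly K A₂ := by
  rw [charPoly, charPoly, charPoly, lattice_prodArr,
    Finset.sum_image (fun a _ b _ hab => prod_fn_injective hab)]
  rw [Finset.sum_mul_sum, ← Finset.sum_product']
  apply Finset.sum_congr rfl
  intro p hp
  rw [Finset.mem_product] at hp
  rw [mob_prod (top_mem_lattice A₁) (top_mem_lattice A₂) hp.1 hp.2,
    finrank_prod_sub, map_mul, pow_add]
  ring

end ProdChar

section ProdGeom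
variable {V₁ : Type u₁} [AddCommGroup V₁] [Module K V₁]
  {V₂ : Type u₂} [AddCommGroup V₂] [Module K V₂]

theorem map_prodSubEquiv_comap_left (X₁ H₁ : Submodule K V₁) (X₂ : Submodule K V₂) :
    ((H₁.prod (⊤ : Submodule K V₂)).comap (X₁.prod X₂).subtype).map
      ((prodSubEquiv X₁ X₂) : (X₁.prod X₂ : Submodule K (V₁ × V₂)) →ₗ[K] ↥X₁ × ↥X₂) =
      (H₁.comap X₁.subtype).prod ⊤ := by
  ext y
  constructor
  · intro hy
    obtain ⟨z, hz, hzy⟩ := Submodule.mem_map.1 hy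
    rw [Submodule.mem_comap, Submodule.subtype_apply] at hz
    refine Submodule.mem_prod.2 ⟨?_, trivial⟩
    rw [Submodule.mem_comap, Submodule.subtype_apply]
    have h1 : ((y.1 : V₁)) = (z : V₁ × V₂).1 := by rw [← hzy]; rfl
    rw [h1]
    exact (Submodule.mem_prod.1 hz).1
  · intro hy
    have h1 := (Submodule.mem_prod.1 hy).1
    rw [Submodule.mem_comap, Submodule.subtype_apply] at h1
    refine Submodule.mem_map.2
      ⟨⟨((y.1 : V₁), (y.2 : V₂)), Submodule.mem_prod.2 ⟨y.1.2, y.2.2⟩⟩, ?_, ?_⟩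
    · rw [Submodule.mem_comap, Submodule.subtype_apply]
      exact Submodule.mem_prod.2 ⟨h1, trivial⟩
    · exact Prod.ext (Subtype.ext rfl) (Subtype.ext rfl)

theorem map_prodSubEquiv_comap_right (X₁ : Submodule K V₁) (X₂ H₂ : Submodule K V₂) :
    ((Submodule.prod (⊤ : Submodule K V₁) H₂).comap (X₁.prod X₂).subtype).map
      ((prodSubEquiv X₁ X₂) : (X₁.prod X₂ : Submodule K (V₁ × V₂)) →ₗ[K] ↥X₁ × ↥X₂) =
      Submodule.prod ⊤ (H₂.comap X₂.subtype) := by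
  ext y
  constructor
  · intro hy
    obtain ⟨z, hz, hzy⟩ := Submodule.mem_map.1 hy
    rw [Submodule.mem_comap, Submodule.subtype_apply] at hz
    refine Submodule.mem_prod.2 ⟨trivial, ?_⟩
    rw [Submodule.mem_comap, Submodule.subtype_apply]
    have h1 : ((y.2 : V₂)) = (z : V₁ × V₂).2 := by rw [← hzy]; rfl
    rw [h1]
    exact (Submodule.mem_prod.1 hz).2
  · intro hy
    have h1 := (Submodule.mem_prod.1 hy).2
    rw [Submodule.mem_comap, Submodule.subtype_apply] at h1
    refine Submodule.mem_map.2
      ⟨⟨((y.1 : V₁), (y.2 : V₂)), Submodule.mem_prod.2 ⟨y.1.2, y.2.2⟩⟩, ?_, ?_⟩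
    · rw [Submodule.mem_comap, Submodule.subtype_apply]
      exact Submodule.mem_prod.2 ⟨trivial, h1⟩
    · exact Prod.ext (Subtype.ext rfl) (Subtype.ext rfl)

theorem restrict_prodArr (A₁ : Finset (Submodule K V₁)) (A₂ : Finset (Submodule K V₂))
    (X₁ : Submodule K V₁) (X₂ : Submodule K V₂) :
    (restrict K (prodArr K A₁ A₂) (X₁.prod X₂)).image
      (fun Y => Y.map ((prodSubEquiv X₁ X₂) :
        (X₁.prod X₂ : Submodule K (V₁ × V₂)) →ₗ[K] ↥X₁ × ↥X₂)) =
      prodArr K (restrict K A₁ X₁) (restrict K A₂ X₂) := by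
  ext Y
  rw [Finset.mem_image]
  constructor
  · rintro ⟨Z, hZ, rfl⟩
    obtain ⟨H, hH, hle, rfl⟩ := mem_restrict.1 hZ
    rcases mem_prodArr.1 hH with ⟨H₁, hH₁, rfl⟩ | ⟨H₂, hH₂, rfl⟩
    · rw [map_prodSubEquiv_comap_left]
      refine mem_prodArr.2 (Or.inl ⟨H₁.comap X₁.subtype,
        mem_restrict.2 ⟨H₁, hH₁, ?_, rfl⟩, rfl⟩)
      intro hc
      exact hle (prod_le_prod_iff'.2 ⟨hc, le_top⟩)
    · rw [map_prodSubEquiv_comap_right]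
      refine mem_prodArr.2 (Or.inr ⟨H₂.comap X₂.subtype,
        mem_restrict.2 ⟨H₂, hH₂, ?_, rfl⟩, rfl⟩)
      intro hc
      exact hle (prod_le_prod_iff'.2 ⟨le_top, hc⟩)
  · intro hY
    rcases mem_prodArr.1 hY with ⟨Y₁, hY₁, rfl⟩ | ⟨Y₂, hY₂, rfl⟩
    · obtain ⟨H₁, hH₁, hle, rfl⟩ := mem_restrict.1 hY₁
      refine ⟨(H₁.prod ⊤).comap (X₁.prod X₂).subtype, mem_restrict.2 ⟨H₁.prod ⊤,
        mem_prodArr.2 (Or.inl ⟨H₁, hH₁, rfl⟩), ?_, rfl⟩,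
        map_prodSubEquiv_comap_left X₁ H₁ X₂⟩
      intro hc
      exact hle (prod_le_prod_iff'.1 hc).1
    · obtain ⟨H₂, hH₂, hle, rfl⟩ := mem_restrict.1 hY₂
      refine ⟨(Submodule.prod ⊤ H₂).comap (X₁.prod X₂).subtype,
        mem_restrict.2 ⟨Submodule.prod ⊤ H₂,
          mem_prodArr.2 (Or.inr ⟨H₂, hH₂, rfl⟩), ?_, rfl⟩,
        map_prodSubEquiv_comap_right X₁ X₂ H₂⟩
      intro hc
      exact hle (prod_le_prod_iff'.1 hc).2

variable {W₁ : Type u'} [AddCommGroup W₁] [Module K W₁]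
  {W₂ : Type u} [AddCommGroup W₂] [Module K W₂]

theorem map_prod_prod (e₁ : V₁ ≃ₗ[K] W₁) (e₂ : V₂ ≃ₗ[K] W₂)
    (p : Submodule K V₁) (q : Submodule K V₂) :
    (p.prod q).map ((e₁.prodCongr e₂ : (V₁ × V₂) ≃ₗ[K] W₁ × W₂) : (V₁ × V₂) →ₗ[K] W₁ × W₂) =
      (p.map (e₁ : V₁ →ₗ[K] W₁)).prod (q.map (e₂ : V₂ →ₗ[K] W₂)) := by
  ext y
  simp only [Submodule.mem_map, Submodule.mem_prod]
  constructor
  · rintro ⟨z, ⟨h1, h2⟩, rfl⟩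
    exact ⟨⟨z.1, h1, rfl⟩, ⟨z.2, h2, rfl⟩⟩
  · rintro ⟨⟨a, ha, ha'⟩, ⟨b, hb, hb'⟩⟩
    exact ⟨(a, b), ⟨ha, hb⟩, Prod.ext ha' hb'⟩

theorem prodArr_image (e₁ : V₁ ≃ₗ[K] W₁) (e₂ : V₂ ≃ₗ[K] W₂)
    (B₁ : Finset (Submodule K V₁)) (B₂ : Finset (Submodule K V₂)) :
    (prodArr K B₁ B₂).image
      (fun H => H.map ((e₁.prodCongr e₂ : (V₁ × V₂) ≃ₗ[K] W₁ × W₂) : (V₁ × V₂) →ₗ[K] W₁ × W₂)) =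
      prodArr K (B₁.image fun H => H.map (e₁ : V₁ →ₗ[K] W₁))
        (B₂.image fun H => H.map (e₂ : V₂ →ₗ[K] W₂)) := by
  rw [prodArr, prodArr, Finset.image_union]
  congr 1
  · rw [Finset.image_image, Finset.image_image]
    apply Finset.image_congr
    intro H _
    show (H.prod ⊤).map _ = (H.map (e₁ : V₁ →ₗ[K] W₁)).prod ⊤
    rw [map_prod_prod, map_equiv_top]
  · rw [Finset.image_image, Finset.image_image]
    apply Finset.image_congr
    intro H _
    show (Submodule.prod ⊤ H).map _ = Submodule.prod ⊤ (H.map (e₂ : V₂ →ₗ[K] W₂))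
    rw [map_prod_prod, map_equiv_top]

theorem image_map_trans {U : Type u₁} [AddCommGroup U] [Module K U]
    (e : V₁ ≃ₗ[K] W₁) (f : W₁ ≃ₗ[K] U) (A : Finset (Submodule K V₁)) :
    (A.image fun H => H.map (e : V₁ →ₗ[K] W₁)).image (fun H => H.map (f : W₁ →ₗ[K] U)) =
      A.image (fun H => H.map ((e.trans f) : V₁ →ₗ[K] U)) := by
  rw [Finset.image_image]
  apply Finset.image_congr
  intro H _
  show (H.map (e : V₁ →ₗ[K] W₁)).map (f : W₁ →ₗ[K] U) = _
  rw [← Submodule.map_comp]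
  rfl

theorem map_topEquiv_comap (H : Submodule K V₁) :
    (H.comap (⊤ : Submodule K V₁).subtype).map
      ((Submodule.topEquiv : (⊤ : Submodule K V₁) ≃ₗ[K] V₁) :
        (⊤ : Submodule K V₁) →ₗ[K] V₁) = H := by
  ext x
  simp only [Submodule.mem_map, Submodule.mem_comap, Submodule.subtype_apply]
  constructor
  · rintro ⟨z, hz, rfl⟩
    exact hz
  · intro hx
    exact ⟨⟨x, trivial⟩, hx, rfl⟩

theorem restrict_top_image {A : Finset (Submodule K V₁)}
    (hc : IsCentralArrangement K A) :
    (restrict K A ⊤).image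
      (fun Y => Y.map ((Submodule.topEquiv : (⊤ : Submodule K V₁) ≃ₗ[K] V₁) :
        (⊤ : Submodule K V₁) →ₗ[K] V₁)) = A := by
  have hfil : A.filter (fun H => ¬ (⊤ : Submodule K V₁) ≤ H) = A :=
    Finset.filter_true_of_mem (fun H hH hle => (hc H hH).ne_top (top_le_iff.1 hle))
  rw [restrict, hfil, Finset.image_image]
  have : ∀ H ∈ A, (H.comap (⊤ : Submodule K V₁).subtype).map
      ((Submodule.topEquiv : (⊤ : Submodule K V₁) ≃ₗ[K] V₁) :
        (⊤ : Submodule K V₁) →ₗ[K] V₁) = H := fun H _ => map_topEquiv_comap H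
  calc A.image _ = A.image id := Finset.image_congr (fun H hH => this H hH)
    _ = A := Finset.image_id

theorem map_prodComm_prod (p : Submodule K V₁) (q : Submodule K V₂) :
    (p.prod q).map ((LinearEquiv.prodComm K V₁ V₂) : (V₁ × V₂) →ₗ[K] V₂ × V₁) =
      q.prod p := by
  ext y
  simp only [Submodule.mem_map, Submodule.mem_prod]
  constructor
  · rintro ⟨z, ⟨h1, h2⟩, rfl⟩
    exact ⟨h2, h1⟩
  · rintro ⟨h1, h2⟩
    exact ⟨(y.2, y.1), ⟨h2, h1⟩, rfl⟩

theorem prodArr_comm (A₁ : Finset (Submodule K V₁)) (A₂ : Finset (Submodule K V₂)) :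
    (prodArr K A₁ A₂).image
      (fun H => H.map ((LinearEquiv.prodComm K V₁ V₂) : (V₁ × V₂) →ₗ[K] V₂ × V₁)) =
      prodArr K A₂ A₁ := by
  rw [prodArr, prodArr, Finset.image_union, Finset.union_comm]
  congr 1
  · rw [Finset.image_image]
    apply Finset.image_congr
    intro H _
    show (Submodule.prod ⊤ H).map _ = H.prod ⊤
    rw [map_prodComm_prod]
  · rw [Finset.image_image]
    apply Finset.image_congr
    intro H _
    show (H.prod ⊤).map _ = Submodule.prod ⊤ H
    rw [map_prodComm_prod]

end ProdGeom

section Glue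
variable {V₁ : Type u₁} [AddCommGroup V₁] [Module K V₁]
  {V₂ : Type u₂} [AddCommGroup V₂] [Module K V₂]

theorem image_map_refl {V : Type u} [AddCommGroup V] [Module K V]
    (A : Finset (Submodule K V)) :
    A.image (fun H => H.map ((LinearEquiv.refl K V : V ≃ₗ[K] V) : V →ₗ[K] V)) = A := by
  calc A.image (fun H => H.map ((LinearEquiv.refl K V : V ≃ₗ[K] V) : V →ₗ[K] V))
      = A.image id := Finset.image_congr (fun H _ => by
        show H.map _ = H
        rw [LinearEquiv.refl_toLinearMap, Submodule.map_id])
    _ = A := Finset.image_id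

theorem image_map_symm_of {V : Type u} [AddCommGroup V] [Module K V]
    {W : Type u'} [AddCommGroup W] [Module K W] (e : V ≃ₗ[K] W)
    {B : Finset (Submodule K V)} {C : Finset (Submodule K W)}
    (h : B.image (fun H => H.map (e : V →ₗ[K] W)) = C) :
    C.image (fun H => H.map ((e.symm : W ≃ₗ[K] V) : W →ₗ[K] V)) = B := by
  rw [← h, image_map_trans e e.symm B]
  have : e.trans e.symm = LinearEquiv.refl K V := by
    ext x
    simp
  rw [this, image_map_refl]

/-- The identification of `X₁ ⊕ V₂` inside `V₁ ⊕ V₂` with `X₁ × V₂`. -/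
def eLeft (X₁ : Submodule K V₁) :
    ((X₁.prod (⊤ : Submodule K V₂)) : Submodule K (V₁ × V₂)) ≃ₗ[K] ↥X₁ × V₂ :=
  (prodSubEquiv X₁ ⊤).trans ((LinearEquiv.refl K X₁).prodCongr
    (Submodule.topEquiv : (⊤ : Submodule K V₂) ≃ₗ[K] V₂))

/-- The identification of `V₁ ⊕ X₂` inside `V₁ ⊕ V₂` with `V₁ × X₂`. -/
def eRight (X₂ : Submodule K V₂) :
    ((Submodule.prod (⊤ : Submodule K V₁) X₂) : Submodule K (V₁ × V₂)) ≃ₗ[K] V₁ × ↥X₂ :=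
  (prodSubEquiv ⊤ X₂).trans
    ((Submodule.topEquiv : (⊤ : Submodule K V₁) ≃ₗ[K] V₁).prodCongr (LinearEquiv.refl K X₂))

theorem restrict_prodArr_left (A₁ : Finset (Submodule K V₁)) {A₂ : Finset (Submodule K V₂)}
    (hc₂ : IsCentralArrangement K A₂) (X₁ : Submodule K V₁) :
    (restrict K (prodArr K A₁ A₂) (X₁.prod (⊤ : Submodule K V₂))).image
      (fun Y => Y.map ((eLeft (V₂ := V₂) X₁) :
        ((X₁.prod (⊤ : Submodule K V₂)) : Submodule K (V₁ × V₂)) →ₗ[K] ↥X₁ × V₂)) =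
      prodArr K (restrict K A₁ X₁) A₂ := by
  rw [show eLeft (V₂ := V₂) X₁ = (prodSubEquiv X₁ ⊤).trans ((LinearEquiv.refl K X₁).prodCongr
    (Submodule.topEquiv : (⊤ : Submodule K V₂) ≃ₗ[K] V₂)) from rfl]
  rw [← image_map_trans (prodSubEquiv X₁ ⊤)
    ((LinearEquiv.refl K X₁).prodCongr (Submodule.topEquiv : (⊤ : Submodule K V₂) ≃ₗ[K] V₂))]
  rw [restrict_prodArr A₁ A₂ X₁ ⊤, prodArr_image, image_map_refl, restrict_top_image hc₂]

theorem restrict_prodArr_right {A₁ : Finset (Submodule K V₁)} (A₂ : Finset (Submodule K V₂))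
    (hc₁ : IsCentralArrangement K A₁) (X₂ : Submodule K V₂) :
    (restrict K (prodArr K A₁ A₂) (Submodule.prod (⊤ : Submodule K V₁) X₂)).image
      (fun Y => Y.map ((eRight (V₁ := V₁) X₂) :
        ((Submodule.prod (⊤ : Submodule K V₁) X₂) : Submodule K (V₁ × V₂)) →ₗ[K] V₁ × ↥X₂)) =
      prodArr K A₁ (restrict K A₂ X₂) := by
  rw [show eRight (V₁ := V₁) X₂ = (prodSubEquiv ⊤ X₂).trans
    ((Submodule.topEquiv : (⊤ : Submodule K V₁) ≃ₗ[K] V₁).prodCongr (LinearEquiv.refl K X₂))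
    from rfl]
  rw [← image_map_trans (prodSubEquiv ⊤ X₂)
    ((Submodule.topEquiv : (⊤ : Submodule K V₁) ≃ₗ[K] V₁).prodCongr (LinearEquiv.refl K X₂))]
  rw [restrict_prodArr A₁ A₂ ⊤ X₂, prodArr_image, image_map_refl, restrict_top_image hc₁]

set_option maxHeartbeats 1000000 in
/-- Forward: a divisional chain for a product yields chains for the factors. -/
theorem divFreeAux_prod_forward (n : ℕ) :
    ∀ {V₁ : Type u₁} [AddCommGroup V₁] [Module K V₁] [FiniteDimensional K V₁]
      {V₂ : Type u₂} [AddCommGroup V₂] [Module K V₂] [FiniteDimensional K V₂]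
      (A₁ : Finset (Submodule K V₁)) (A₂ : Finset (Submodule K V₂)),
      IsCentralArrangement K A₁ → IsCentralArrangement K A₂ →
      DivFreeAux K n (V₁ × V₂) (prodArr K A₁ A₂) →
      DivFreeAux K n V₁ A₁ ∧ DivFreeAux K n V₂ A₂ := by
  induction n with
  | zero =>
    intro V₁ _ _ _ V₂ _ _ _ A₁ A₂ hc₁ hc₂ h
    rcases h with h | h
    · rw [Module.finrank_prod] at h
      exact ⟨Or.inl (by omega), Or.inl (by omega)⟩
    · obtain ⟨h1, h2⟩ := prodArr_eq_empty_iff.1 h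
      exact ⟨Or.inr h1, Or.inr h2⟩
  | succ n ih =>
    intro V₁ _ _ _ V₂ _ _ _ A₁ A₂ hc₁ hc₂ h
    rcases h with h | h | ⟨H, hH, hrec, hdvd⟩
    · rw [Module.finrank_prod] at h
      exact ⟨divFreeAux_of_le2 _ (by omega), divFreeAux_of_le2 _ (by omega)⟩
    · obtain ⟨h1, h2⟩ := prodArr_eq_empty_iff.1 h
      rw [h1, h2]
      exact ⟨divFreeAux_of_empty _, divFreeAux_of_empty _⟩
    · rcases mem_prodArr.1 hH with ⟨H₁, hH₁, rfl⟩ | ⟨H₂, hH₂, rfl⟩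
      · have htrans := divFreeAux_image (K := K) n (eLeft H₁) _ hrec
        rw [restrict_prodArr_left A₁ hc₂ H₁] at htrans
        obtain ⟨ha, hb⟩ := ih (restrict K A₁ H₁) A₂ (restrict_central hc₁ H₁) hc₂ htrans
        have hchar := charPoly_image (eLeft H₁)
          (restrict K (prodArr K A₁ A₂) (H₁.prod (⊤ : Submodule K V₂)))
        rw [restrict_prodArr_left A₁ hc₂ H₁, charPoly_prodArr] at hchar
        rw [← hchar, charPoly_prodArr] at hdvd
        have hdvd₁ : charPoly K (restrict K A₁ H₁) ∣ charPoly K A₁ :=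
          (mul_dvd_mul_iff_right (charPoly_ne_zero hc₂)).1 hdvd
        exact ⟨Or.inr (Or.inr ⟨H₁, hH₁, ha, hdvd₁⟩), divFreeAux_succ_mono n hb⟩
      · have htrans := divFreeAux_image (K := K) n (eRight H₂) _ hrec
        rw [restrict_prodArr_right A₂ hc₁ H₂] at htrans
        obtain ⟨ha, hb⟩ := ih A₁ (restrict K A₂ H₂) hc₁ (restrict_central hc₂ H₂) htrans
        have hchar := charPoly_image (eRight H₂)
          (restrict K (prodArr K A₁ A₂) (Submodule.prod (⊤ : Submodule K V₁) H₂))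
        rw [restrict_prodArr_right A₂ hc₁ H₂, charPoly_prodArr] at hchar
        rw [← hchar, charPoly_prodArr] at hdvd
        have hdvd₂ : charPoly K (restrict K A₂ H₂) ∣ charPoly K A₂ := by
          rw [mul_comm (charPoly K A₁) (charPoly K (restrict K A₂ H₂)),
            mul_comm (charPoly K A₁) (charPoly K A₂)] at hdvd
          exact (mul_dvd_mul_iff_right (charPoly_ne_zero hc₁)).1 hdvd
        exact ⟨divFreeAux_succ_mono n ha, Or.inr (Or.inr ⟨H₂, hH₂, hb, hdvd₂⟩)⟩

/-- From divisional freeness, extract a dividing hyperplane (for nonempty `A`). -/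
theorem exists_division {V : Type u} [AddCommGroup V] [Module K V]
    [FiniteDimensional K V] {A : Finset (Submodule K V)}
    (hc : IsCentralArrangement K A) (hA : A ≠ ∅) (h : IsDivFree K A) :
    ∃ H ∈ A, IsDivFree K (restrict K A H) ∧
      charPoly K (restrict K A H) ∣ charPoly K A := by
  by_cases h2 : Module.finrank K V ≤ 2
  · obtain ⟨H, hH⟩ := Finset.nonempty_iff_ne_empty.2 hA
    refine ⟨H, hH, ?_, charPoly_restrict_dvd_of_low hc h2 hH⟩
    apply divFreeAux_of_le2
    have := Submodule.finrank_le H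
    omega
  · obtain ⟨m, hm⟩ : ∃ m, Module.finrank K V = m + 1 := ⟨Module.finrank K V - 1, by omega⟩
    unfold IsDivFree at h
    rw [hm] at h
    rcases h with h | h | ⟨H, hH, hrec, hdvd⟩
    · omega
    · exact absurd h hA
    · refine ⟨H, hH, ?_, hdvd⟩
      have := (hc H hH).finrank_add_one
      unfold IsDivFree
      have hfr : Module.finrank K H = m := by omega
      rw [hfr]
      exact hrec

end Glue

set_option maxHeartbeats 1600000 in
/-- Backward: products of divisionally free arrangements are divisionally free. -/
theorem divFreeAux_prodArr_of (N : ℕ) :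
    ∀ {V₁ : Type u₁} [AddCommGroup V₁] [Module K V₁] [FiniteDimensional K V₁]
      {V₂ : Type u₂} [AddCommGroup V₂] [Module K V₂] [FiniteDimensional K V₂]
      (A₁ : Finset (Submodule K V₁)) (A₂ : Finset (Submodule K V₂)),
      IsCentralArrangement K A₁ → IsCentralArrangement K A₂ →
      A₁.card + A₂.card ≤ N →
      IsDivFree K A₁ → IsDivFree K A₂ →
      DivFreeAux K (Module.finrank K V₁ + Module.finrank K V₂) (V₁ × V₂)
        (prodArr K A₁ A₂) := by
  induction N with
  | zero =>
    intro V₁ _ _ _ V₂ _ _ _ A₁ A₂ hc₁ hc₂ hcard hd₁ hd₂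
    have h1 : A₁ = ∅ := Finset.card_eq_zero.1 (by omega)
    have h2 : A₂ = ∅ := Finset.card_eq_zero.1 (by omega)
    rw [show prodArr K A₁ A₂ = ∅ from prodArr_eq_empty_iff.2 ⟨h1, h2⟩]
    exact divFreeAux_of_empty _
  | succ N ih =>
    intro V₁ _ _ _ V₂ _ _ _ A₁ A₂ hc₁ hc₂ hcard hd₁ hd₂
    by_cases hF : Module.finrank K V₁ + Module.finrank K V₂ ≤ 2
    · exact divFreeAux_of_le2 _ (by rw [Module.finrank_prod]; exact hF)
    · by_cases hA₁ : A₁ = ∅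
      · by_cases hA₂ : A₂ = ∅
        · rw [show prodArr K A₁ A₂ = ∅ from prodArr_eq_empty_iff.2 ⟨hA₁, hA₂⟩]
          exact divFreeAux_of_empty _
        · -- divide on the second factor
          obtain ⟨H₂, hH₂, hdf, hdvd⟩ := exists_division hc₂ hA₂ hd₂
          have hihc := ih A₁ (restrict K A₂ H₂) hc₁ (restrict_central hc₂ H₂)
            (by have := restrict_card_lt hH₂; omega) hd₁ hdf
          have hfr := (hc₂ H₂ hH₂).finrank_add_one
          obtain ⟨F', hF'⟩ : ∃ F', Module.finrank K V₁ + Module.finrank K V₂ = F' + 1 :=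
            ⟨Module.finrank K V₁ + Module.finrank K V₂ - 1, by omega⟩
          rw [hF']
          refine Or.inr (Or.inr ⟨Submodule.prod ⊤ H₂,
            mem_prodArr.2 (Or.inr ⟨H₂, hH₂, rfl⟩), ?_, ?_⟩)
          · have hfuel : Module.finrank K V₁ + Module.finrank K H₂ = F' := by omega
            have himg := image_map_symm_of (eRight (V₁ := V₁) H₂)
              (restrict_prodArr_right A₂ hc₁ H₂)
            have htr := divFreeAux_image (K := K) F' (eRight (V₁ := V₁) H₂).symm
              (prodArr K A₁ (restrict K A₂ H₂)) (hfuel ▸ hihc)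
            rw [himg] at htr
            exact htr
          · have hchar := charPoly_image (eRight (V₁ := V₁) H₂)
              (restrict K (prodArr K A₁ A₂) (Submodule.prod (⊤ : Submodule K V₁) H₂))
            rw [restrict_prodArr_right A₂ hc₁ H₂, charPoly_prodArr] at hchar
            rw [← hchar, charPoly_prodArr]
            exact mul_dvd_mul_left _ hdvd
      · -- divide on the first factor
        obtain ⟨H₁, hH₁, hdf, hdvd⟩ := exists_division hc₁ hA₁ hd₁
        have hihc := ih (restrict K A₁ H₁) A₂ (restrict_central hc₁ H₁) hc₂
          (by have := restrict_card_lt hH₁; omega) hdf hd₂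
        have hfr := (hc₁ H₁ hH₁).finrank_add_one
        obtain ⟨F', hF'⟩ : ∃ F', Module.finrank K V₁ + Module.finrank K V₂ = F' + 1 :=
          ⟨Module.finrank K V₁ + Module.finrank K V₂ - 1, by omega⟩
        rw [hF']
        refine Or.inr (Or.inr ⟨H₁.prod ⊤,
          mem_prodArr.2 (Or.inl ⟨H₁, hH₁, rfl⟩), ?_, ?_⟩)
        · have hfuel : Module.finrank K H₁ + Module.finrank K V₂ = F' := by omega
          have himg := image_map_symm_of (eLeft (V₂ := V₂) H₁)
            (restrict_prodArr_left A₁ hc₂ H₁)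
          have htr := divFreeAux_image (K := K) F' (eLeft (V₂ := V₂) H₁).symm
            (prodArr K (restrict K A₁ H₁) A₂) (hfuel ▸ hihc)
          rw [himg] at htr
          exact htr
        · have hchar := charPoly_image (eLeft (V₂ := V₂) H₁)
            (restrict K (prodArr K A₁ A₂) (H₁.prod (⊤ : Submodule K V₂)))
          rw [restrict_prodArr_left A₁ hc₂ H₁, charPoly_prodArr] at hchar
          rw [← hchar, charPoly_prodArr]
          exact mul_dvd_mul_right hdvd _


end Arrangement

namespace Arrangement

set_option maxHeartbeats 1600000 in
/-- The product `A = A₁ × A₂` in `V₁ ⊕ V₂` is hereditarily divisionally free if and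
only if both `A₁` and `A₂` are hereditarily divisionally free. -/
theorem prod_heredDivFree {K : Type*} [Field K]
    {V₁ : Type*} [AddCommGroup V₁] [Module K V₁] [FiniteDimensional K V₁]
    {V₂ : Type*} [AddCommGroup V₂] [Module K V₂] [FiniteDimensional K V₂]
    (A₁ : Finset (Submodule K V₁)) (A₂ : Finset (Submodule K V₂))
    (h₁ : IsCentralArrangement K A₁) (h₂ : IsCentralArrangement K A₂) :
    IsHeredDivFree K (prodArr K A₁ A₂) ↔ IsHeredDivFree K A₁ ∧ IsHeredDivFree K A₂ := by
  constructor
  · intro h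
    constructor
    · intro X₁ hX₁
      have hmem : X₁.prod (⊤ : Submodule K V₂) ∈ lattice K (prodArr K A₁ A₂) := by
        rw [lattice_prodArr]
        exact Finset.mem_image.2 ⟨(X₁, ⊤),
          Finset.mem_product.2 ⟨hX₁, top_mem_lattice A₂⟩, rfl⟩
      have hd := h _ hmem
      have htrans := divFreeAux_image (K := K)
        (Module.finrank K ↥(X₁.prod (⊤ : Submodule K V₂))) (eLeft (V₂ := V₂) X₁) _ hd
      rw [restrict_prodArr_left A₁ h₂ X₁] at htrans
      obtain ⟨ha, _⟩ := divFreeAux_prod_forward _ _ _ (restrict_central h₁ X₁) h₂ htrans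
      exact divFreeAux_down _ (restrict_central h₁ X₁) _ (by omega) ha
    · intro X₂ hX₂
      have hmem : Submodule.prod (⊤ : Submodule K V₁) X₂ ∈ lattice K (prodArr K A₁ A₂) := by
        rw [lattice_prodArr]
        exact Finset.mem_image.2 ⟨(⊤, X₂),
          Finset.mem_product.2 ⟨top_mem_lattice A₁, hX₂⟩, rfl⟩
      have hd := h _ hmem
      have htrans := divFreeAux_image (K := K)
        (Module.finrank K ↥(Submodule.prod (⊤ : Submodule K V₁) X₂))
        (eRight (V₁ := V₁) X₂) _ hd
      rw [restrict_prodArr_right A₂ h₁ X₂] at htrans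
      obtain ⟨_, hb⟩ := divFreeAux_prod_forward _ _ _ h₁ (restrict_central h₂ X₂) htrans
      exact divFreeAux_down _ (restrict_central h₂ X₂) _ (by omega) hb
  · rintro ⟨hh₁, hh₂⟩ X hX
    rw [lattice_prodArr] at hX
    obtain ⟨⟨X₁, X₂⟩, hmem, rfl⟩ := Finset.mem_image.1 hX
    rw [Finset.mem_product] at hmem
    have hcall := divFreeAux_prodArr_of
      ((restrict K A₁ X₁).card + (restrict K A₂ X₂).card)
      (restrict K A₁ X₁) (restrict K A₂ X₂)
      (restrict_central h₁ X₁) (restrict_central h₂ X₂) le_rfl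
      (hh₁ X₁ hmem.1) (hh₂ X₂ hmem.2)
    have himg := image_map_symm_of (prodSubEquiv X₁ X₂) (restrict_prodArr A₁ A₂ X₁ X₂)
    have htr := divFreeAux_image (K := K)
      (Module.finrank K ↥X₁ + Module.finrank K ↥X₂) (prodSubEquiv X₁ X₂).symm
      (prodArr K (restrict K A₁ X₁) (restrict K A₂ X₂)) hcall
    rw [himg] at htr
    show DivFreeAux K (Module.finrank K ↥(X₁.prod X₂)) _ _
    rw [finrank_prod_sub X₁ X₂]
    exact htr

end Arrangement
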